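/- Let f be holomorphic and nowhere vanishing on the open unit disk D, and let ω : (0,1] → (0,∞) be moderate. Then there exists C > 0 with |f'(z)| ≤ C ω(d_z)/d_z for all z ∈ D if and only if there exists C' > 0 such that |f(z)| log(M_f(z)/|f(z)|) ≤ C' ω(d_z) for all z ∈ D. -/

import Mathlib

/-!
If `|f'| ≤ C ω(d)/d` on the disc, moderateness of `ω` makes the same bound (up to `2 C₀`) hold
on all of `B_z`, so the mean value inequality gives `M_f(z) ≤ |f(z)| + C C₀ ω(d_z)`, and
`|f(z)| log (M_f(z)/|f(z)|) ≤ M_f(z) - |f(z)|`.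

Conversely, write `f = exp g` on `B_z`. Then `Re (g - g(z)) ≤ A := log (M_f(z)/|f(z)|)` there, and
the Schwarz lemma applied to `(g - g(z)) / (2A - (g - g(z)))`, which maps `B_z` into the closed
unit disc, gives `|g'(z)| ≤ 4A/d_z`, that is `|f'(z)| ≤ 4 |f(z)| A / d_z ≤ 4 C' ω(d_z)/d_z`.
-/

open Set Metric

lemma Real.mul_log_div_le_sub {a b : ℝ} (ha : 0 ≤ a) (hab : a ≤ b) :
    a * Real.log (b / a) ≤ b - a := by
  rcases ha.eq_or_lt with rfl | ha
  · simpa using ha.trans hab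
  calc a * Real.log (b / a) ≤ a * (b / a - 1) :=
        mul_le_mul_of_nonneg_left (Real.log_le_sub_one_of_pos (div_pos (ha.trans_le hab) ha)) ha.le
    _ = b - a := by field_simp

namespace Complex

lemma exists_eqOn_exp_of_ne_zero_on_ball {f : ℂ → ℂ} {c : ℂ} {r : ℝ}
    (hf : DifferentiableOn ℂ f (ball c r)) (hnz : ∀ w ∈ ball c r, f w ≠ 0) :
    ∃ g : ℂ → ℂ, (∀ w ∈ ball c r, HasDerivAt g (deriv f w / f w) w) ∧
      EqOn (exp ∘ g) f (ball c r) := by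
  have hlogDeriv : DifferentiableOn ℂ (fun w ↦ deriv f w / f w) (ball c r) :=
    (hf.deriv isOpen_ball).div hf hnz
  obtain ⟨g, hgc, hg⟩ := hlogDeriv.isExactOn_ball.with_val_at c (log (f c))
  have hderiv : ∀ w ∈ ball c r,
      HasDerivAt (fun w ↦ f w * exp (-g w)) 0 w := by
    intro w hw
    have hfw := (hf.differentiableAt (isOpen_ball.mem_nhds hw)).hasDerivAt
    refine (hfw.mul (hg w hw).neg.cexp).congr_deriv ?_
    field_simp [hnz w hw]
    ring
  have hconst : ∀ w ∈ ball c r, f w * exp (-g w) = 1 := by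
    intro w hw
    have hc : c ∈ ball c r := mem_ball_self (pos_of_mem_ball hw)
    have := isOpen_ball.is_const_of_deriv_eq_zero (convex_ball c r).isPreconnected
      (fun w hw ↦ (hderiv w hw).differentiableAt.differentiableWithinAt)
      (fun w hw ↦ (hderiv w hw).deriv) hw hc
    rw [this, hgc, exp_neg, exp_log (hnz c hc), mul_inv_cancel₀ (hnz c hc)]
  refine ⟨g, hg, fun w hw ↦ ?_⟩
  have := hconst w hw
  rw [exp_neg, mul_inv_eq_one₀ (exp_ne_zero _)] at this
  exact this.symm

lemma norm_le_norm_two_mul_sub_of_re_le {u : ℂ} {A : ℝ} (hA : 0 ≤ A) (hu : u.re ≤ A) :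
    ‖u‖ ≤ ‖2 * (A : ℂ) - u‖ := by
  rw [← sq_le_sq₀ (norm_nonneg _) (norm_nonneg _), Complex.sq_norm, Complex.sq_norm]
  simp [normSq_apply]
  nlinarith [mul_nonneg hA (sub_nonneg.2 hu)]

lemma norm_deriv_le_of_re_sub_le_of_pos {φ : ℂ → ℂ} {c : ℂ} {r A : ℝ}
    (hφ : DifferentiableOn ℂ φ (ball c r)) (hr : 0 < r) (hA : 0 < A)
    (hre : ∀ w ∈ ball c r, (φ w - φ c).re ≤ A) :
    ‖deriv φ c‖ ≤ 2 * A / r := by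
  -- the Möbius map `u ↦ u / (2A - u)` sends the half-plane `re u ≤ A` into the closed unit disc
  set ψ : ℂ → ℂ := fun w ↦ (φ w - φ c) / (2 * A - (φ w - φ c))
  have hden : ∀ w ∈ ball c r, 2 * (A : ℂ) - (φ w - φ c) ≠ 0 := by
    intro w hw h
    have := congrArg re h
    simp at this
    linarith [sub_re (φ w) (φ c) ▸ hre w hw]
  have hψ : DifferentiableOn ℂ ψ (ball c r) :=
    (hφ.sub_const _).div ((hφ.sub_const _).const_sub _) hden
  have hmaps : MapsTo ψ (ball c r) (closedBall (ψ c) 1) := by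
    intro w hw
    rw [mem_closedBall, dist_eq_norm]
    simpa [ψ, norm_div] using
      div_le_one_of_le₀ (norm_le_norm_two_mul_sub_of_re_le hA.le (hre w hw)) (norm_nonneg _)
  have hc : c ∈ ball c r := mem_ball_self hr
  have hψc : HasDerivAt ψ (deriv φ c / (2 * A)) c := by
    have hφc := ((hφ.differentiableAt (isOpen_ball.mem_nhds hc)).hasDerivAt).sub_const (φ c)
    refine (hφc.div (hφc.const_sub _) (hden c hc)).congr_deriv ?_
    have hA' : (A : ℂ) ≠ 0 := ofReal_ne_zero.mpr hA.ne'
    simp only [sub_self, sub_zero, zero_mul]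
    field_simp
  have := norm_deriv_le_div_of_mapsTo_ball hψ hmaps hr
  rw [hψc.deriv, norm_div, norm_mul, norm_real, Real.norm_of_nonneg hA.le, norm_ofNat,
    div_le_div_iff₀ (by positivity) hr] at this
  rw [le_div_iff₀ hr]
  linarith

lemma norm_deriv_le_of_re_sub_le {φ : ℂ → ℂ} {c : ℂ} {r A : ℝ}
    (hφ : DifferentiableOn ℂ φ (ball c r)) (hr : 0 < r)
    (hre : ∀ w ∈ ball c r, (φ w - φ c).re ≤ A) :
    ‖deriv φ c‖ ≤ 2 * A / r := by
  have hA : 0 ≤ A := by simpa using hre c (mem_ball_self hr)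
  refine le_of_forall_pos_le_add fun ε hε ↦ ?_
  calc ‖deriv φ c‖ ≤ 2 * (A + ε * r / 2) / r :=
        norm_deriv_le_of_re_sub_le_of_pos hφ hr (by positivity)
          fun w hw ↦ (hre w hw).trans (by linarith [mul_pos hε hr])
    _ = 2 * A / r + ε := by field_simp

lemma norm_deriv_le_mul_log_div {f : ℂ → ℂ} {c : ℂ} {r M : ℝ}
    (hf : DifferentiableOn ℂ f (ball c r)) (hnz : ∀ w ∈ ball c r, f w ≠ 0) (hr : 0 < r)
    (hM : ∀ w ∈ ball c r, ‖f w‖ ≤ M) :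
    ‖deriv f c‖ ≤ 2 * (‖f c‖ * Real.log (M / ‖f c‖)) / r := by
  obtain ⟨g, hg, hexp⟩ := exists_eqOn_exp_of_ne_zero_on_ball hf hnz
  have hc : c ∈ ball c r := mem_ball_self hr
  have hfc : 0 < ‖f c‖ := norm_pos_iff.mpr (hnz c hc)
  have hre : ∀ w ∈ ball c r, (g w).re = Real.log ‖f w‖ := fun w hw ↦ by
    rw [← hexp hw, Function.comp_apply, norm_exp, Real.log_exp]
  have hgc : ‖deriv g c‖ ≤ 2 * Real.log (M / ‖f c‖) / r := by
    refine norm_deriv_le_of_re_sub_le (fun w hw ↦ (hg w hw).differentiableAt.differentiableWithinAt)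
      hr fun w hw ↦ ?_
    have hfw : 0 < ‖f w‖ := norm_pos_iff.mpr (hnz w hw)
    rw [sub_re, hre w hw, hre c hc, Real.log_div (hfw.trans_le (hM w hw)).ne' hfc.ne']
    linarith [Real.log_le_log hfw (hM w hw)]
  have hfg : deriv f c = f c * deriv g c := by
    rw [(hg c hc).deriv, mul_div_cancel₀ _ (hnz c hc)]
  calc ‖deriv f c‖ = ‖f c‖ * ‖deriv g c‖ := by rw [hfg, norm_mul]
    _ ≤ ‖f c‖ * (2 * Real.log (M / ‖f c‖) / r) := by gcongr
    _ = 2 * (‖f c‖ * Real.log (M / ‖f c‖)) / r := by ring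

end Complex

lemma norm_le_norm_add_of_norm_deriv_le {f : ℂ → ℂ} {c : ℂ} {r K : ℝ}
    (hf : DifferentiableOn ℂ f (ball c r)) (hK : ∀ w ∈ ball c r, ‖deriv f w‖ ≤ K) {w : ℂ}
    (hw : w ∈ ball c r) : ‖f w‖ ≤ ‖f c‖ + K * r := by
  have hc : c ∈ ball c r := mem_ball_self (pos_of_mem_ball hw)
  have hmvt := (convex_ball c r).norm_image_sub_le_of_norm_deriv_le
    (fun x hx ↦ hf.differentiableAt (isOpen_ball.mem_nhds hx)) hK hc hw
  have hKr : K * ‖w - c‖ ≤ K * r :=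
    mul_le_mul_of_nonneg_left (mem_ball_iff_norm.mp hw).le ((norm_nonneg _).trans (hK c hc))
  linarith [norm_le_norm_add_norm_sub' (f w) (f c)]

lemma norm_mul_log_sSup_div_le {f : ℂ → ℂ} {c : ℂ} {r K : ℝ}
    (hf : DifferentiableOn ℂ f (ball c r)) (hr : 0 < r)
    (hK : ∀ w ∈ ball c r, ‖deriv f w‖ ≤ K) :
    ‖f c‖ * Real.log (sSup ((fun w ↦ ‖f w‖) '' ball c r) / ‖f c‖) ≤ K * r := by
  have hbound : ∀ y ∈ (fun w ↦ ‖f w‖) '' ball c r, y ≤ ‖f c‖ + K * r := by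
    rintro _ ⟨w, hw, rfl⟩
    exact norm_le_norm_add_of_norm_deriv_le hf hK hw
  have hfc : ‖f c‖ ≤ sSup ((fun w ↦ ‖f w‖) '' ball c r) :=
    le_csSup ⟨_, hbound⟩ (mem_image_of_mem _ (mem_ball_self hr))
  have hsSup := csSup_le ((nonempty_ball.mpr hr).image _) hbound
  linarith [Real.mul_log_div_le_sub (norm_nonneg _) hfc]

lemma closedBall_half_one_sub_norm_subset {z : ℂ} (hz : z ∈ ball (0 : ℂ) 1) :
    closedBall z ((1 - ‖z‖) / 2) ⊆ ball 0 1 := by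
  rw [mem_ball_zero_iff] at hz
  exact closedBall_subset_ball' (by rw [dist_zero_right]; linarith)

lemma one_sub_norm_mem_Icc_of_mem_ball_half {z x : ℂ}
    (hx : x ∈ ball z ((1 - ‖z‖) / 2)) :
    1 - ‖x‖ ∈ Icc ((1 - ‖z‖) / 2) ((1 - ‖z‖) * 3 / 2) := by
  rw [mem_ball_iff_norm] at hx
  constructor <;> linarith [norm_sub_norm_le x z, norm_sub_norm_le z x, norm_sub_rev x z]

lemma one_le_of_moderate {ω : ℝ → ℝ} {C₀ : ℝ} (hpos : ∀ t ∈ Ioc (0 : ℝ) 1, 0 < ω t)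
    (hmod : ∀ a ∈ Ioc (0 : ℝ) 1, ∀ b ∈ Ioc (0 : ℝ) 1,
      1 / 2 ≤ a / b → a / b ≤ 2 → 1 / C₀ ≤ ω a / ω b ∧ ω a / ω b ≤ C₀) :
    1 ≤ C₀ := by
  have h1 : (1 : ℝ) ∈ Ioc 0 1 := ⟨one_pos, le_rfl⟩
  simpa [div_self (hpos 1 h1).ne'] using (hmod 1 h1 1 h1 (by norm_num) (by norm_num)).2

lemma weight_div_le_of_mem_ball_half {ω : ℝ → ℝ} {C₀ : ℝ}
    (hpos : ∀ t ∈ Ioc (0 : ℝ) 1, 0 < ω t)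
    (hmod : ∀ a ∈ Ioc (0 : ℝ) 1, ∀ b ∈ Ioc (0 : ℝ) 1,
      1 / 2 ≤ a / b → a / b ≤ 2 → 1 / C₀ ≤ ω a / ω b ∧ ω a / ω b ≤ C₀)
    {z x : ℂ} (hz : z ∈ ball (0 : ℂ) 1) (hx : x ∈ ball z ((1 - ‖z‖) / 2)) :
    ω (1 - ‖x‖) / (1 - ‖x‖) ≤ 2 * C₀ * ω (1 - ‖z‖) / (1 - ‖z‖) := by
  have hdz : 1 - ‖z‖ ∈ Ioc (0 : ℝ) 1 := ⟨by linarith [mem_ball_zero_iff.mp hz], by simp⟩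
  have hx1 : x ∈ ball (0 : ℂ) 1 :=
    closedBall_half_one_sub_norm_subset hz (ball_subset_closedBall hx)
  have hdx : 1 - ‖x‖ ∈ Ioc (0 : ℝ) 1 := ⟨by linarith [mem_ball_zero_iff.mp hx1], by simp⟩
  obtain ⟨hlow, hupp⟩ := one_sub_norm_mem_Icc_of_mem_ball_half hx
  have hωz := hpos _ hdz
  have hωx : ω (1 - ‖x‖) ≤ C₀ * ω (1 - ‖z‖) := by
    have := (hmod _ hdx _ hdz (by rw [le_div_iff₀ hdz.1]; linarith)
      (by rw [div_le_iff₀ hdz.1]; linarith)).2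
    rwa [div_le_iff₀ hωz] at this
  calc ω (1 - ‖x‖) / (1 - ‖x‖) ≤ C₀ * ω (1 - ‖z‖) / ((1 - ‖z‖) / 2) :=
        div_le_div₀ ((hpos _ hdx).le.trans hωx) hωx (by linarith [hdz.1]) hlow
    _ = 2 * C₀ * ω (1 - ‖z‖) / (1 - ‖z‖) := by field_simp

theorem bloch_type_iff_log_oscillation_nonvanishing_general (ω : ℝ → ℝ) (f : ℂ → ℂ) (C₀ : ℝ)
    (hf : DifferentiableOn ℂ f (ball (0 : ℂ) 1))
    (hnz : ∀ z ∈ ball (0 : ℂ) 1, f z ≠ 0)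
    (hpos : ∀ t ∈ Ioc (0 : ℝ) 1, 0 < ω t)
    (hmod : ∀ a ∈ Ioc (0 : ℝ) 1, ∀ b ∈ Ioc (0 : ℝ) 1,
      1 / 2 ≤ a / b → a / b ≤ 2 → 1 / C₀ ≤ ω a / ω b ∧ ω a / ω b ≤ C₀) :
    (∃ C > 0, ∀ z ∈ ball (0 : ℂ) 1,
        ‖deriv f z‖ ≤ C * ω (1 - ‖z‖) / (1 - ‖z‖)) ↔
    (∃ C' > 0, ∀ z ∈ ball (0 : ℂ) 1,
        ‖f z‖ *
          Real.log (sSup ((fun w => ‖f w‖) '' ball z ((1 - ‖z‖) / 2))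
            / ‖f z‖) ≤ C' * ω (1 - ‖z‖)) := by
  constructor
  · rintro ⟨C, hC, hbloch⟩
    have hC₀ := one_le_of_moderate hpos hmod
    refine ⟨C * C₀, by positivity, fun z hz ↦ ?_⟩
    have hsub := ball_subset_closedBall.trans (closedBall_half_one_sub_norm_subset hz)
    have hd : 0 < 1 - ‖z‖ := by linarith [mem_ball_zero_iff.mp hz]
    calc _ ≤ 2 * C * C₀ * ω (1 - ‖z‖) / (1 - ‖z‖) * ((1 - ‖z‖) / 2) := by
          refine norm_mul_log_sSup_div_le (hf.mono hsub) (half_pos hd) fun x hx ↦ ?_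
          calc ‖deriv f x‖ ≤ C * (ω (1 - ‖x‖) / (1 - ‖x‖)) := by
                rw [← mul_div_assoc]; exact hbloch x (hsub hx)
            _ ≤ C * (2 * C₀ * ω (1 - ‖z‖) / (1 - ‖z‖)) := by
                gcongr C * ?_; exact weight_div_le_of_mem_ball_half hpos hmod hz hx
            _ = 2 * C * C₀ * ω (1 - ‖z‖) / (1 - ‖z‖) := by ring
      _ = C * C₀ * ω (1 - ‖z‖) := by field_simp
  · rintro ⟨C', hC', hosc⟩
    refine ⟨4 * C', by positivity, fun z hz ↦ ?_⟩
    have hsub := closedBall_half_one_sub_norm_subset hz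
    have hd : 0 < 1 - ‖z‖ := by linarith [mem_ball_zero_iff.mp hz]
    have hbdd : BddAbove ((fun w ↦ ‖f w‖) '' ball z ((1 - ‖z‖) / 2)) :=
      ((isCompact_closedBall _ _).bddAbove_image (hf.continuousOn.mono hsub).norm).mono
        (image_mono ball_subset_closedBall)
    calc ‖deriv f z‖
        ≤ 2 * (‖f z‖ * Real.log (sSup ((fun w ↦ ‖f w‖) '' ball z ((1 - ‖z‖) / 2)) / ‖f z‖))
          / ((1 - ‖z‖) / 2) :=
          Complex.norm_deriv_le_mul_log_div (hf.mono (ball_subset_closedBall.trans hsub))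
            (fun w hw ↦ hnz w (hsub (ball_subset_closedBall hw))) (half_pos hd)
            fun w hw ↦ le_csSup hbdd (mem_image_of_mem _ hw)
      _ ≤ 2 * (C' * ω (1 - ‖z‖)) / ((1 - ‖z‖) / 2) := by gcongr 2 * ?_ / _; exact hosc z hz
      _ = 4 * C' * ω (1 - ‖z‖) / (1 - ‖z‖) := by field_simp; ring

theorem bloch_type_iff_log_oscillation_nonvanishing (ω : ℝ → ℝ) (f : ℂ → ℂ) (C₀ : ℝ)
    (hf : DifferentiableOn ℂ f (ball (0 : ℂ) 1))
    (hnz : ∀ z ∈ ball (0 : ℂ) 1, f z ≠ 0)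
    (hpos : ∀ t ∈ Ioc (0 : ℝ) 1, 0 < ω t) (hC₀ : 0 < C₀)
    (hmod : ∀ a ∈ Ioc (0 : ℝ) 1, ∀ b ∈ Ioc (0 : ℝ) 1,
      1 / 2 ≤ a / b → a / b ≤ 2 → 1 / C₀ ≤ ω a / ω b ∧ ω a / ω b ≤ C₀) :
    (∃ C > 0, ∀ z ∈ ball (0 : ℂ) 1,
        ‖deriv f z‖ ≤ C * ω (1 - ‖z‖) / (1 - ‖z‖)) ↔
    (∃ C' > 0, ∀ z ∈ ball (0 : ℂ) 1,
        ‖f z‖ *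
          Real.log (sSup ((fun w => ‖f w‖) '' ball z ((1 - ‖z‖) / 2))
            / ‖f z‖) ≤ C' * ω (1 - ‖z‖)) :=
  bloch_type_iff_log_oscillation_nonvanishing_general ω f C₀ hf hnz hpos hmod
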